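/- Heap strengthening for bPCFRL evaluation: if ⊢ (R, H₁) : Γ, Γ ⊢ M : τ ⊣ Γ', H = H₁ ⊎ H₂, and (M, R, H) ⇓ (v, R', H'), then there exists H₁' such that (M, R, H₁) ⇓ (v, R', H₁') and H' = H₁' ⊎ H₂: the evaluation depends only on and modifies only the portion of the heap owned by the typing environment. -/

import Mathlib

/-- Base-or-reference types `ρ ::= b | ref ρ` of bPCFRL. -/
inductive RTy : Type where
  | base
  | ref (ρ : RTy)
  deriving DecidableEq

/-- Normal types `ν ::= unit | ρ | ν₁ →ⁿ ν₂` (the label `n` is the number of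
reference cells contained in the closure). -/
inductive NTy : Type where
  | unit
  | ofR (ρ : RTy)
  | fn (a : NTy) (n : ℕ) (b : NTy)
  deriving DecidableEq

/-- Full types: normal types and recursive-function types `ν₁ →^Δ ν₂`, where `Δ`
is a normal type environment describing the reference cells accessed by the
recursive function. -/
inductive FTy : Type where
  | ofN (ν : NTy)
  | rfn (a : NTy) (Δ : List (ℕ × NTy)) (b : NTy)
  deriving DecidableEq

/-- Sharable types: base types, `unit`, functions owning no reference cells, and
recursive-function types. -/
def sharableN : NTy → Bool
  | .unit => true
  | .ofR .base => true
  | .ofR (.ref _) => false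
  | .fn _ n _ => n == 0

def sharableF : FTy → Bool
  | .ofN ν => sharableN ν
  | .rfn _ _ _ => true

def sizeR : RTy → ℕ
  | .base => 1
  | .ref ρ => sizeR ρ

/-- The store size `|ν|` of a normal type. -/
def sizeN : NTy → ℕ
  | .unit => 0
  | .ofR .base => 0
  | .ofR (.ref ρ) => sizeR ρ
  | .fn _ n _ => n

def sizeF : FTy → ℕ
  | .ofN ν => sizeN ν
  | .rfn _ _ _ => 0

/-- Type environments are sequences of bindings of (distinct) variables. -/
abbrev TEnv := List (ℕ × FTy)

def envSize (Γ : TEnv) : ℕ := (Γ.map fun p => sizeF p.2).sum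

def lookupTE (Γ : TEnv) (x : ℕ) : Option FTy :=
  ((Γ.reverse).find? fun p => p.1 == x).map (·.2)

def removeTE (Γ : TEnv) (x : ℕ) : TEnv := Γ.filter fun p => p.1 != x

/-- `Γ∖x`: remove the binding of `x` if its type is not sharable. -/
def dropNS (Γ : TEnv) (x : ℕ) : TEnv :=
  Γ.filter fun p => p.1 != x || sharableF p.2

/-- Remove the binding of `x` if the given type `τ` is not sharable. -/
def dropIfNS (Γ : TEnv) (x : ℕ) (τ : FTy) : TEnv :=
  if sharableF τ then Γ else removeTE Γ x

/-- `splitTE Γ S` splits `Γ` into the part on the variables in `S` and the rest;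
bindings of sharable type in `S` are kept in both parts. -/
def splitTE : TEnv → Finset ℕ → TEnv × TEnv
  | [], _ => ([], [])
  | (x, τ) :: Γ, S =>
    let p := splitTE Γ S
    if x ∈ S then
      if sharableF τ then ((x, τ) :: p.1, (x, τ) :: p.2)
      else ((x, τ) :: p.1, p.2)
    else (p.1, (x, τ) :: p.2)

def nenvToT (Δ : List (ℕ × NTy)) : TEnv := Δ.map fun p => (p.1, FTy.ofN p.2)

def domTE (Γ : TEnv) : Finset ℕ := (Γ.map Prod.fst).toFinset

/-- Expressions of bPCFRL (in A-normal form, with named variables; following the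
paper, variable occurrences and binders are annotated with their types). `B` is
the type of constants of the base type `b`. -/
inductive Expr (B : Type) : Type where
  | fail
  | unitE
  | const (c : B)
  | var (x : ℕ) (τ : FTy)
  | op (f : List B → B) (xs : List ℕ)
  | deref (x : ℕ) (ρ : RTy)
  | mkref (x : ℕ) (ρ : RTy)
  | assign (y x : ℕ) (ρ : RTy)
  | lete (x : ℕ) (τ : FTy) (e₁ e₂ : Expr B)
  | ite (x : ℕ) (e₁ e₂ : Expr B)
  | lam (x : ℕ) (ν : NTy) (e : Expr B)
  | fix (f x : ℕ) (ν₁ : NTy) (Δ : List (ℕ × NTy)) (ν₂ : NTy) (e : Expr B)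
  | app (f x : ℕ)

/-- Free variables. -/
def fv {B : Type} : Expr B → Finset ℕ
  | .fail => ∅
  | .unitE => ∅
  | .const _ => ∅
  | .var x _ => {x}
  | .op _ xs => xs.toFinset
  | .deref x _ => {x}
  | .mkref x _ => {x}
  | .assign y x _ => {y, x}
  | .lete x _ e₁ e₂ => fv e₁ ∪ (fv e₂ \ {x})
  | .ite x e₁ e₂ => insert x (fv e₁ ∪ fv e₂)
  | .lam x _ e => fv e \ {x}
  | .fix f x _ _ _ e => fv e \ {f, x}
  | .app f x => {f, x}

def isBaseF (τ : FTy) : Prop := τ = .ofN .unit ∨ τ = .ofN (.ofR .base)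

/-- The ownership type system of bPCFRL: `Typed Γ M τ Γ'` is the judgment
`Γ ⊢ M : τ ⊣ Γ'` with pre-type environment `Γ` and post-type environment `Γ'`. -/
inductive Typed {B : Type} : TEnv → Expr B → FTy → TEnv → Prop where
  | fail {Γ τ} : isBaseF τ → Typed Γ .fail τ Γ
  | unit {Γ} : Typed Γ .unitE (.ofN .unit) Γ
  | const {Γ c} : Typed Γ (.const c) (.ofN (.ofR .base)) Γ
  | var {Γ x τ} : lookupTE Γ x = some τ → Typed Γ (.var x τ) τ (dropNS Γ x)
  | op {Γ f xs} : (∀ y ∈ xs, lookupTE Γ y = some (.ofN (.ofR .base))) →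
      Typed Γ (.op f xs) (.ofN (.ofR .base)) Γ
  | deref {Γ x ρ} : lookupTE Γ x = some (.ofN (.ofR (.ref ρ))) →
      Typed Γ (.deref x ρ) (.ofN (.ofR ρ)) (dropIfNS Γ x (.ofN (.ofR ρ)))
  | mkref {Γ x ρ} : lookupTE Γ x = some (.ofN (.ofR ρ)) →
      Typed Γ (.mkref x ρ) (.ofN (.ofR (.ref ρ))) (dropNS Γ x)
  | assign {Γ y x ρ} : lookupTE Γ y = some (.ofN (.ofR (.ref ρ))) →
      lookupTE Γ x = some (.ofN (.ofR ρ)) →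
      Typed Γ (.assign y x ρ) (.ofN .unit) (dropNS Γ x)
  | lete {Γ Γ' Γ'' x τ τ' e₁ e₂} : Typed Γ e₁ τ' Γ'' →
      Typed (Γ'' ++ [(x, τ')]) e₂ τ Γ' →
      Typed Γ (.lete x τ' e₁ e₂) τ (removeTE Γ' x)
  | ite {Γ Γ' x τ e₁ e₂} : lookupTE Γ x = some (.ofN (.ofR .base)) →
      Typed Γ e₁ τ Γ' → Typed Γ e₂ τ Γ' → Typed Γ (.ite x e₁ e₂) τ Γ'
  | lam {Γ Γ' Δ x ν₁ ν₂ e} : splitTE Γ (fv (Expr.lam x ν₁ e)) = (Δ, Γ') →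
      Typed (Δ ++ [(x, .ofN ν₁)]) e (.ofN ν₂) (Δ ++ [(x, .ofN ν₁)]) →
      Typed Γ (.lam x ν₁ e) (.ofN (.fn ν₁ (envSize Δ) ν₂)) Γ'
  | rfun {Γ Γ' Δ f x ν₁ ν₂ e} :
      splitTE Γ (fv (Expr.fix f x ν₁ Δ ν₂ e)) = (nenvToT Δ, Γ') →
      Typed (nenvToT Δ ++ [(f, .rfn ν₁ Δ ν₂), (x, .ofN ν₁)]) e (.ofN ν₂)
            (nenvToT Δ ++ [(f, .rfn ν₁ Δ ν₂), (x, .ofN ν₁)]) →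
      Typed Γ (.fix f x ν₁ Δ ν₂ e) (.ofN (.fn ν₁ (envSize (nenvToT Δ)) ν₂)) Γ'
  | app {Γ f x ν₁ m ν₂} : lookupTE Γ f = some (.ofN (.fn ν₁ m ν₂)) →
      lookupTE Γ x = some (.ofN ν₁) →
      Typed Γ (.app f x) (.ofN ν₂) Γ
  | rapp {Γ f x ν₁ Δ ν₂} : lookupTE Γ f = some (.rfn ν₁ Δ ν₂) →
      lookupTE Γ x = some (.ofN ν₁) →
      (nenvToT Δ).Sublist (removeTE (removeTE Γ f) x) →
      Typed Γ (.app f x) (.ofN ν₂) Γ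

/-- Run-time values of bPCFRL. Closure environments record, as in the paper,
the (annotated) type of each variable together with its value. -/
inductive Val (B : Type) : Type where
  | unitV
  | constV (c : B)
  | loc (ℓ : ℕ)
  | clos (x : ℕ) (ν : NTy) (e : Expr B) (R : ℕ → Option (FTy × Val B))
  | closR (f x : ℕ) (ν₁ : NTy) (Δ : List (ℕ × NTy)) (ν₂ : NTy) (e : Expr B)
      (R : ℕ → Option (FTy × Val B))

/-- Run-time environments (maps from variables to typed values). -/
abbrev REnv (B : Type) := ℕ → Option (FTy × Val B)

/-- Heaps (maps from locations to values). -/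
abbrev Heap (B : Type) := ℕ → Option (Val B)

def emptyR {B : Type} : REnv B := fun _ => none
def emptyH {B : Type} : Heap B := fun _ => none

def updR {B : Type} (R : REnv B) (x : ℕ) (τ : FTy) (v : Val B) : REnv B :=
  fun y => if y = x then some (τ, v) else R y

def remR {B : Type} (R : REnv B) (x : ℕ) : REnv B :=
  fun y => if y = x then none else R y

/-- Remove `x` from `R` if the type `τ` is not sharable. -/
def dropRV {B : Type} (R : REnv B) (x : ℕ) (τ : FTy) : REnv B :=
  if sharableF τ then R else remR R x

def updH {B : Type} (H : Heap B) (ℓ : ℕ) (v : Val B) : Heap B :=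
  fun ℓ' => if ℓ' = ℓ then some v else H ℓ'

/-- Disjointness of heaps. -/
def HDisj {B : Type} (H₁ H₂ : Heap B) : Prop := ∀ ℓ, H₁ ℓ = none ∨ H₂ ℓ = none

/-- (Disjoint) union of heaps. -/
def HUn {B : Type} (H₁ H₂ : Heap B) : Heap B :=
  fun ℓ => (H₁ ℓ).orElse fun _ => H₂ ℓ

/-- `splitREnv R S` splits a run-time environment analogously to `splitTE`. -/
def splitREnv {B : Type} (R : REnv B) (S : Finset ℕ) : REnv B × REnv B :=
  (fun x => if x ∈ S then R x else none,
   fun x =>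
     match R x with
     | some (τ, v) => if x ∈ S ∧ sharableF τ = false then none else some (τ, v)
     | none => none)

def constOf {B : Type} : Val B → Option B
  | .constV c => some c
  | _ => none

def lookupConsts {B : Type} (R : REnv B) (xs : List ℕ) : Option (List B) :=
  xs.mapM fun x => (R x).bind fun p => constOf p.2

/-- Evaluation answers: `fail`, or a value together with the updated environment
and heap. -/
inductive Ans (B : Type) : Type where
  | fail
  | res (v : Val B) (R : REnv B) (H : Heap B)

def Ans.removeVar {B : Type} : Ans B → ℕ → Ans B
  | .fail, _ => .fail
  | .res v R H, x => .res v (remR R x) H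

def Ans.withEnv {B : Type} : Ans B → REnv B → Ans B
  | .fail, _ => .fail
  | .res v _ H, R => .res v R H

/-- Big-step evaluation of bPCFRL: `Eval tru M R H a` evaluates `M` under the
environment `R` and heap `H` (`tru` is the truth-value of base constants, used
in conditionals). Failure propagates through evaluation. -/
inductive Eval {B : Type} (tru : B → Bool) : Expr B → REnv B → Heap B → Ans B → Prop where
  | fail {R H} : Eval tru .fail R H .fail
  | unit {R H} : Eval tru .unitE R H (.res .unitV R H)
  | const {R H c} : Eval tru (.const c) R H (.res (.constV c) R H)
  | var {R H x τ v} : R x = some (τ, v) →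
      Eval tru (.var x τ) R H (.res v (dropRV R x τ) H)
  | op {R H f xs bs} : lookupConsts R xs = some bs →
      Eval tru (.op f xs) R H (.res (.constV (f bs)) R H)
  | deref {R H x τ ρ ℓ v} : R x = some (τ, .loc ℓ) → H ℓ = some v →
      Eval tru (.deref x ρ) R H (.res v (dropRV R x (.ofN (.ofR ρ))) H)
  | mkref {R H x τ ρ v ℓ} : R x = some (τ, v) → H ℓ = none →
      Eval tru (.mkref x ρ) R H (.res (.loc ℓ) (dropRV R x (.ofN (.ofR ρ))) (updH H ℓ v))
  | assign {R H y x τy τx ρ ℓ v} : R y = some (τy, .loc ℓ) → R x = some (τx, v) →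
      Eval tru (.assign y x ρ) R H (.res .unitV (dropRV R x (.ofN (.ofR ρ))) (updH H ℓ v))
  | leteF {R H x τ e₁ e₂} : Eval tru e₁ R H .fail → Eval tru (.lete x τ e₁ e₂) R H .fail
  | lete {R H x τ e₁ e₂ v₁ R₁ H₁ a} : Eval tru e₁ R H (.res v₁ R₁ H₁) →
      Eval tru e₂ (updR R₁ x τ v₁) H₁ a →
      Eval tru (.lete x τ e₁ e₂) R H (a.removeVar x)
  | iteT {R H x τ b e₁ e₂ a} : R x = some (τ, .constV b) → tru b = true →
      Eval tru e₁ R H a → Eval tru (.ite x e₁ e₂) R H a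
  | iteF {R H x τ b e₁ e₂ a} : R x = some (τ, .constV b) → tru b = false →
      Eval tru e₂ R H a → Eval tru (.ite x e₁ e₂) R H a
  | lam {R H x ν e} : Eval tru (.lam x ν e) R H
      (.res (.clos x ν e (splitREnv R (fv (Expr.lam x ν e))).1)
            (splitREnv R (fv (Expr.lam x ν e))).2 H)
  | fixE {R H f x ν₁ Δ ν₂ e} : Eval tru (.fix f x ν₁ Δ ν₂ e) R H
      (.res (.closR f x ν₁ Δ ν₂ e (splitREnv R (fv (Expr.fix f x ν₁ Δ ν₂ e))).1)
            (splitREnv R (fv (Expr.fix f x ν₁ Δ ν₂ e))).2 H)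
  | app1 {R H f x τf τx y ν e R₁ vx a} : R f = some (τf, .clos y ν e R₁) →
      R x = some (τx, vx) →
      Eval tru e (updR R₁ y (.ofN ν) vx) H a →
      Eval tru (.app f x) R H (a.withEnv R)
  | app2 {R H f x τf τx g y ν₁ Δ ν₂ e R₁ vx a} :
      R f = some (τf, .closR g y ν₁ Δ ν₂ e R₁) →
      R x = some (τx, vx) →
      Eval tru e
        (updR (updR R₁ g (.rfn ν₁ Δ ν₂) (.closR g y ν₁ Δ ν₂ e R₁)) y (.ofN ν₁) vx) H a →
      Eval tru (.app f x) R H (a.withEnv R)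

mutual
/-- Run-time typing of values against a heap fragment (ownership of the heap is
split among the bindings). -/
inductive ValTyped {B : Type} : Val B → Heap B → FTy → Prop where
  | unit : ValTyped (B := B) .unitV emptyH (.ofN .unit)
  | const {c} : ValTyped (B := B) (.constV c) emptyH (.ofN (.ofR .base))
  | loc {v H ρ ℓ} : ValTyped v H (.ofN (.ofR ρ)) → H ℓ = none →
      ValTyped (B := B) (.loc ℓ) (updH H ℓ v) (.ofN (.ofR (.ref ρ)))
  | clos {R H Γ x ν₁ ν₂ e m} : EnvTyped R H Γ →
      Typed (Γ ++ [(x, .ofN ν₁)]) e (.ofN ν₂) (Γ ++ [(x, .ofN ν₁)]) →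
      envSize Γ = m →
      ValTyped (B := B) (.clos x ν₁ e R) H (.ofN (.fn ν₁ m ν₂))
  | closR {R H Δ f x ν₁ ν₂ e m} : EnvTyped R H (nenvToT Δ) →
      Typed (nenvToT Δ ++ [(f, .rfn ν₁ Δ ν₂), (x, .ofN ν₁)]) e (.ofN ν₂)
            (nenvToT Δ ++ [(f, .rfn ν₁ Δ ν₂), (x, .ofN ν₁)]) →
      envSize (nenvToT Δ) = m →
      ValTyped (B := B) (.closR f x ν₁ Δ ν₂ e R) H (.ofN (.fn ν₁ m ν₂))

/-- Run-time typing of environments and heaps: `⊢ (R, H) : Γ`. -/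
inductive EnvTyped {B : Type} : REnv B → Heap B → TEnv → Prop where
  | nil {R H} : EnvTyped (B := B) R H []
  | cons {R H₁ H₂ Γ x τ v} : EnvTyped R H₁ Γ → ValTyped v H₂ τ → HDisj H₁ H₂ →
      EnvTyped (updR R x τ v) (HUn H₁ H₂) (Γ ++ [(x, τ)])
  | consR {R R₁ H Δ f x ν₁ ν₂ e} : EnvTyped R H (nenvToT Δ) →
      Typed (nenvToT Δ ++ [(f, .rfn ν₁ Δ ν₂), (x, .ofN ν₁)]) e (.ofN ν₂)
            (nenvToT Δ ++ [(f, .rfn ν₁ Δ ν₂), (x, .ofN ν₁)]) →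
      (∀ y : ℕ, (lookupTE (nenvToT Δ) y).isSome → R₁ y = R y) →
      EnvTyped (updR R f (.rfn ν₁ Δ ν₂) (.closR f x ν₁ Δ ν₂ e R₁)) H
               (nenvToT Δ ++ [(f, .rfn ν₁ Δ ν₂)])
end

/-! The evaluation of `M` only touches locations reachable from the values of its free
variables. Typing puts `fv M` inside `Γ`, and `⊢ (R, H₁) : Γ` yields a set `C` of locations
allocated in `H₁` that contains everything reachable from the values of `Γ` and is closed under
following stored values. Evaluation preserves such a closed footprint (allocation extends it by
a cell that is fresh in `H₁ ⊎ H₂`, hence outside `H₂`; reads and writes stay inside it), so every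
heap access happens in `H₁` and the frame `H₂` passes through untouched. -/

section

variable {B : Type}

lemma HUn_apply_of_some {H₁ H₂ : Heap B} {ℓ : ℕ} {v : Val B} (h : H₁ ℓ = some v) :
    HUn H₁ H₂ ℓ = some v := by
  simp [HUn, h]

lemma HUn_apply_eq_none {H₁ H₂ : Heap B} {ℓ : ℕ} (h : HUn H₁ H₂ ℓ = none) :
    H₁ ℓ = none ∧ H₂ ℓ = none := by
  cases h₁ : H₁ ℓ <;> simp_all [HUn]

lemma HUn_apply_of_none {H₁ H₂ : Heap B} {ℓ : ℕ} (h : H₁ ℓ = none) : HUn H₁ H₂ ℓ = H₂ ℓ := by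
  simp [HUn, h]

lemma updH_HUn (H₁ H₂ : Heap B) (ℓ : ℕ) (v : Val B) :
    updH (HUn H₁ H₂) ℓ v = HUn (updH H₁ ℓ v) H₂ := by
  funext ℓ'
  by_cases h : ℓ' = ℓ <;> simp [updH, HUn, h]

lemma HDisj.updH {H₁ H₂ : Heap B} {ℓ : ℕ} (hd : HDisj H₁ H₂) (hℓ : H₂ ℓ = none) (v : Val B) :
    HDisj (updH H₁ ℓ v) H₂ := by
  intro ℓ'
  by_cases h : ℓ' = ℓ
  · exact .inr (h ▸ hℓ)
  · simpa [_root_.updH, h] using hd ℓ'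

lemma mem_domTE {Γ : TEnv} {y : ℕ} : y ∈ domTE Γ ↔ ∃ σ, (y, σ) ∈ Γ := by
  simp [domTE]

lemma domTE_mono {Γ Γ' : TEnv} (h : Γ ⊆ Γ') : domTE Γ ⊆ domTE Γ' := by
  intro y hy
  obtain ⟨σ, hσ⟩ := mem_domTE.1 hy
  exact mem_domTE.2 ⟨σ, h hσ⟩

lemma domTE_append_singleton (Γ : TEnv) (x : ℕ) (τ : FTy) :
    domTE (Γ ++ [(x, τ)]) = insert x (domTE Γ) := by
  ext; simp [domTE]

lemma domTE_append_pair (Γ : TEnv) (x y : ℕ) (σ τ : FTy) :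
    domTE (Γ ++ [(x, σ), (y, τ)]) = insert y (insert x (domTE Γ)) := by
  ext; simp [domTE, or_left_comm]

lemma domTE_append_singleton_sdiff_subset (Γ : TEnv) (x : ℕ) (τ : FTy) :
    domTE (Γ ++ [(x, τ)]) \ {x} ⊆ domTE Γ := by
  rw [domTE_append_singleton]
  exact sdiff_le_iff.2 le_rfl

lemma domTE_removeTE (Γ : TEnv) (x : ℕ) : domTE (removeTE Γ x) = (domTE Γ).erase x := by
  ext y; simp [domTE, removeTE, and_comm]

lemma mem_domTE_of_lookupTE {Γ : TEnv} {y : ℕ} {τ : FTy} (h : lookupTE Γ y = some τ) :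
    y ∈ domTE Γ := by
  simp only [lookupTE, Option.map_eq_some_iff] at h
  obtain ⟨p, hp, -⟩ := h
  have hy : p.1 = y := by simpa using List.find?_some hp
  exact mem_domTE.2 ⟨p.2, hy ▸ List.mem_reverse.1 (List.mem_of_find?_eq_some hp)⟩

lemma lookupTE_isSome_of_mem_domTE {Γ : TEnv} {y : ℕ} (h : y ∈ domTE Γ) :
    (lookupTE Γ y).isSome := by
  obtain ⟨σ, hσ⟩ := mem_domTE.1 h
  simp only [lookupTE, Option.isSome_map]
  exact List.find?_isSome.2 ⟨(y, σ), List.mem_reverse.2 hσ, by simp⟩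

lemma subset_of_splitTE_eq {Γ Δ Γ' : TEnv} {S : Finset ℕ} (h : splitTE Γ S = (Δ, Γ')) :
    Δ ⊆ Γ ∧ Γ' ⊆ Γ := by
  induction Γ generalizing Δ Γ' with
  | nil =>
    simp only [splitTE, Prod.mk.injEq] at h
    simp [← h.1, ← h.2]
  | cons p Γ ih =>
    obtain ⟨x, τ⟩ := p
    obtain ⟨ih₁, ih₂⟩ := ih rfl
    simp only [splitTE] at h
    split_ifs at h <;> simp only [Prod.mk.injEq] at h <;> obtain ⟨rfl, rfl⟩ := h <;>
      simp [List.cons_subset, List.subset_cons_of_subset _ ih₁, List.subset_cons_of_subset _ ih₂]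

lemma Typed.domTE_subset {Γ Γ' : TEnv} {M : Expr B} {τ : FTy} (h : Typed Γ M τ Γ') :
    domTE Γ' ⊆ domTE Γ := by
  induction h with
  | var _ | mkref _ | assign _ _ => exact domTE_mono (List.filter_subset_self _)
  | deref _ =>
    unfold dropIfNS
    split
    · exact subset_rfl
    · exact domTE_mono (List.filter_subset_self _)
  | @lete _ _ _ x _ _ _ _ _ _ ih₁ ih₂ =>
    rw [domTE_removeTE]
    refine (Finset.erase_subset_erase x ih₂).trans ?_
    rw [domTE_append_singleton]
    exact (Finset.erase_insert_subset x _).trans ih₁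
  | ite _ _ _ ih _ => exact ih
  | lam hsplit _ _ | rfun hsplit _ _ =>
    exact domTE_mono (subset_of_splitTE_eq hsplit).2
  | _ => exact subset_rfl

lemma fv_lam_subset {Γ : TEnv} {x : ℕ} {σ : FTy} {ν : NTy} {e : Expr B}
    (h : fv e ⊆ domTE (Γ ++ [(x, σ)])) : fv (Expr.lam x ν e) ⊆ domTE Γ := by
  exact (Finset.sdiff_subset_sdiff h le_rfl).trans (domTE_append_singleton_sdiff_subset ..)

lemma fv_fix_subset {Γ : TEnv} {f x : ℕ} {σ τ : FTy} {ν₁ ν₂ : NTy} {Δ : List (ℕ × NTy)}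
    {e : Expr B} (h : fv e ⊆ domTE (Γ ++ [(f, σ), (x, τ)])) :
    fv (Expr.fix f x ν₁ Δ ν₂ e) ⊆ domTE Γ := by
  rw [domTE_append_pair] at h
  refine sdiff_le_iff.2 (h.trans fun z => ?_)
  simp only [Finset.sup_eq_union, Finset.mem_insert, Finset.mem_union, Finset.mem_singleton]
  tauto

lemma Typed.fv_subset {Γ Γ' : TEnv} {M : Expr B} {τ : FTy} (h : Typed Γ M τ Γ') :
    fv M ⊆ domTE Γ := by
  induction h with
  | fail _ | unit | const => exact Finset.empty_subset _
  | var hx | deref hx | mkref hx => simpa [fv] using mem_domTE_of_lookupTE hx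
  | op hxs => exact fun y hy => mem_domTE_of_lookupTE (hxs y (List.mem_toFinset.1 hy))
  | assign hy hx | app hy hx | rapp hy hx _ =>
    simp [fv, Finset.insert_subset_iff, mem_domTE_of_lookupTE hy, mem_domTE_of_lookupTE hx]
  | lete h₁ _ ih₁ ih₂ =>
    exact Finset.union_subset ih₁ ((fv_lam_subset ih₂ (ν := .unit)).trans h₁.domTE_subset)
  | ite hx _ _ ih₁ ih₂ =>
    exact Finset.insert_subset (mem_domTE_of_lookupTE hx) (Finset.union_subset ih₁ ih₂)
  | lam hsplit _ ih => exact (fv_lam_subset ih).trans (domTE_mono (subset_of_splitTE_eq hsplit).1)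
  | rfun hsplit _ ih => exact (fv_fix_subset ih).trans (domTE_mono (subset_of_splitTE_eq hsplit).1)

/-- Only the free variables of a closure body count: the closure can touch no other part of its
environment. -/
inductive Val.Reaches : Val B → ℕ → Prop
  | loc {ℓ : ℕ} : Val.Reaches (.loc ℓ) ℓ
  | clos {x ν e R y τ v ℓ} : y ∈ fv (Expr.lam x ν e) → R y = some (τ, v) → v.Reaches ℓ →
      Val.Reaches (.clos x ν e R) ℓ
  | closR {f x ν₁ Δ ν₂ e R y τ v ℓ} : y ∈ fv (Expr.fix f x ν₁ Δ ν₂ e) → R y = some (τ, v) →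
      v.Reaches ℓ → Val.Reaches (.closR f x ν₁ Δ ν₂ e R) ℓ

def Val.locs (v : Val B) : Set ℕ := {ℓ | v.Reaches ℓ}

def EnvConfined (R : REnv B) (S : Finset ℕ) (C : Set ℕ) : Prop :=
  ∀ y ∈ S, ∀ τ w, R y = some (τ, w) → w.locs ⊆ C

def ClosedFootprint (H : Heap B) (C : Set ℕ) : Prop :=
  ∀ ℓ ∈ C, ∃ w, H ℓ = some w ∧ w.locs ⊆ C

lemma locs_clos_subset_iff {x : ℕ} {ν : NTy} {e : Expr B} {R : REnv B} {C : Set ℕ} :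
    (Val.clos x ν e R).locs ⊆ C ↔ EnvConfined R (fv (Expr.lam x ν e)) C := by
  constructor
  · exact fun h y hy τ w hw ℓ hℓ => h (.clos hy hw hℓ)
  · rintro h ℓ (_ | ⟨hy, hw, hℓ⟩)
    exact h _ hy _ _ hw hℓ

lemma locs_closR_subset_iff {f x : ℕ} {ν₁ ν₂ : NTy} {Δ : List (ℕ × NTy)} {e : Expr B}
    {R : REnv B} {C : Set ℕ} :
    (Val.closR f x ν₁ Δ ν₂ e R).locs ⊆ C ↔
      EnvConfined R (fv (Expr.fix f x ν₁ Δ ν₂ e)) C := by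
  constructor
  · exact fun h y hy τ w hw ℓ hℓ => h (.closR hy hw hℓ)
  · rintro h ℓ (_ | _ | ⟨hy, hw, hℓ⟩)
    exact h _ hy _ _ hw hℓ

namespace EnvConfined

variable {R R' : REnv B} {S S' : Finset ℕ} {C C' : Set ℕ}

lemma mono (h : EnvConfined R S C) (hS : S' ⊆ S) (hC : C ⊆ C') : EnvConfined R S' C' :=
  fun y hy τ w hw => (h y (hS hy) τ w hw).trans hC

lemma locs_subset {y : ℕ} {τ : FTy} {w : Val B} (h : EnvConfined R S C) (hy : y ∈ S)
    (hw : R y = some (τ, w)) : w.locs ⊆ C :=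
  h y hy τ w hw

lemma of_sub (h : EnvConfined R S C) (hR : ∀ y ∈ S, ∀ p, R' y = some p → R y = some p) :
    EnvConfined R' S C :=
  fun y hy τ w hw => h y hy τ w (hR y hy _ hw)

lemma updR {x : ℕ} {τ : FTy} {v : Val B} (h : EnvConfined R (S \ {x}) C)
    (hv : v.locs ⊆ C) : EnvConfined (_root_.updR R x τ v) S C := by
  intro y hy σ w hw
  by_cases hyx : y = x
  · simp only [_root_.updR, hyx, if_true, Option.some.injEq, Prod.mk.injEq] at hw
    exact hw.2 ▸ hv
  · simp only [_root_.updR, hyx, if_false] at hw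
    exact h y (by simp [hy, hyx]) σ w hw

lemma clos_body {R₁ : REnv B} {y : ℕ} {ν : NTy} {e : Expr B} {vx : Val B}
    (hf : (Val.clos y ν e R₁).locs ⊆ C) (hx : vx.locs ⊆ C) :
    EnvConfined (_root_.updR R₁ y (.ofN ν) vx) (fv e) C :=
  (locs_clos_subset_iff.1 hf).updR hx

lemma closR_body {R₁ : REnv B} {g y : ℕ} {ν₁ ν₂ : NTy} {Δ : List (ℕ × NTy)} {e : Expr B}
    {vx : Val B} (hf : (Val.closR g y ν₁ Δ ν₂ e R₁).locs ⊆ C) (hx : vx.locs ⊆ C) :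
    EnvConfined (_root_.updR (_root_.updR R₁ g (.rfn ν₁ Δ ν₂) (.closR g y ν₁ Δ ν₂ e R₁)) y
      (.ofN ν₁) vx) (fv e) C := by
  refine .updR (.updR ((locs_closR_subset_iff.1 hf).mono (fun z => ?_) le_rfl) hf) hx
  simp only [fv, Finset.mem_sdiff, Finset.mem_insert, Finset.mem_singleton]
  tauto

end EnvConfined

namespace ClosedFootprint

variable {H H₁ H₂ : Heap B} {C C' : Set ℕ}

lemma empty (H : Heap B) : ClosedFootprint H ∅ := fun _ h => h.elim

lemma union (h : ClosedFootprint H C) (h' : ClosedFootprint H C') :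
    ClosedFootprint H (C ∪ C') := by
  rintro ℓ (hℓ | hℓ)
  · obtain ⟨w, hw, hwC⟩ := h ℓ hℓ
    exact ⟨w, hw, hwC.trans Set.subset_union_left⟩
  · obtain ⟨w, hw, hwC⟩ := h' ℓ hℓ
    exact ⟨w, hw, hwC.trans Set.subset_union_right⟩

lemma HUn_left (h : ClosedFootprint H₁ C) : ClosedFootprint (HUn H₁ H₂) C := by
  intro ℓ hℓ
  obtain ⟨w, hw, hwC⟩ := h ℓ hℓ
  exact ⟨w, HUn_apply_of_some hw, hwC⟩

lemma HUn_right (hd : HDisj H₁ H₂) (h : ClosedFootprint H₂ C) :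
    ClosedFootprint (HUn H₁ H₂) C := by
  intro ℓ hℓ
  obtain ⟨w, hw, hwC⟩ := h ℓ hℓ
  have h₁ : H₁ ℓ = none := (hd ℓ).resolve_right (by simp [hw])
  exact ⟨w, by rw [HUn_apply_of_none h₁, hw], hwC⟩

lemma updH {ℓ : ℕ} {v : Val B} (h : ClosedFootprint H C) (hv : v.locs ⊆ insert ℓ C) :
    ClosedFootprint (_root_.updH H ℓ v) (insert ℓ C) := by
  rintro ℓ' (rfl | hℓ')
  · exact ⟨v, by simp [_root_.updH], hv⟩
  · by_cases hℓ : ℓ' = ℓ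
    · exact ⟨v, by simp [_root_.updH, hℓ], hv⟩
    · obtain ⟨w, hw, hwC⟩ := h ℓ' hℓ'
      exact ⟨w, by simp [_root_.updH, hℓ, hw], hwC.trans (Set.subset_insert _ _)⟩

lemma updH_of_mem {ℓ : ℕ} {v : Val B} (h : ClosedFootprint H C) (hℓ : ℓ ∈ C) (hv : v.locs ⊆ C) :
    ClosedFootprint (_root_.updH H ℓ v) C := by
  have := h.updH (hv.trans (Set.subset_insert ℓ C))
  rwa [Set.insert_eq_of_mem hℓ] at this

lemma eq_of_HUn_eq {ℓ : ℕ} {w : Val B} (h : ClosedFootprint H₁ C) (hℓ : ℓ ∈ C)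
    (hw : HUn H₁ H₂ ℓ = some w) : H₁ ℓ = some w ∧ w.locs ⊆ C := by
  obtain ⟨w', hw', hw'C⟩ := h ℓ hℓ
  obtain rfl : w' = w := Option.some.inj ((HUn_apply_of_some hw').symm.trans hw)
  exact ⟨hw', hw'C⟩

lemma frame_eq_none {ℓ : ℕ} (h : ClosedFootprint H₁ C) (hd : HDisj H₁ H₂) (hℓ : ℓ ∈ C) :
    H₂ ℓ = none :=
  have ⟨_, hw, _⟩ := h ℓ hℓ
  (hd ℓ).resolve_left (by simp [hw])

end ClosedFootprint

mutual

theorem ValTyped.exists_closedFootprint {v : Val B} {H : Heap B} {τ : FTy} :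
    ValTyped v H τ → ∃ C, ClosedFootprint H C ∧ v.locs ⊆ C
  | .unit | .const => ⟨∅, .empty _, by rintro _ ⟨⟩⟩
  | .loc hv _ => by
    obtain ⟨C, hC, hvC⟩ := hv.exists_closedFootprint
    exact ⟨insert _ C, hC.updH (hvC.trans (Set.subset_insert _ _)), by
      rintro _ ⟨⟩; exact Set.mem_insert _ _⟩
  | .clos hR hbody _ => by
    obtain ⟨C, hC, hRC⟩ := hR.exists_closedFootprint
    exact ⟨C, hC, locs_clos_subset_iff.2 (hRC.mono (fv_lam_subset hbody.fv_subset) le_rfl)⟩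
  | .closR hR hbody _ => by
    obtain ⟨C, hC, hRC⟩ := hR.exists_closedFootprint
    exact ⟨C, hC, locs_closR_subset_iff.2 (hRC.mono (fv_fix_subset hbody.fv_subset) le_rfl)⟩

theorem EnvTyped.exists_closedFootprint {R : REnv B} {H : Heap B} {Γ : TEnv} :
    EnvTyped R H Γ → ∃ C, ClosedFootprint H C ∧ EnvConfined R (domTE Γ) C
  | .nil => ⟨∅, .empty _, fun y hy => by simp [domTE] at hy⟩
  | .cons hR hv hd => by
    obtain ⟨C₁, hC₁, hRC₁⟩ := hR.exists_closedFootprint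
    obtain ⟨C₂, hC₂, hvC₂⟩ := hv.exists_closedFootprint
    refine ⟨C₁ ∪ C₂, hC₁.HUn_left.union (hC₂.HUn_right hd), .updR ?_ ?_⟩
    · exact hRC₁.mono (domTE_append_singleton_sdiff_subset ..) Set.subset_union_left
    · exact hvC₂.trans Set.subset_union_right
  | .consR hR hbody hagree => by
    obtain ⟨C, hC, hRC⟩ := hR.exists_closedFootprint
    refine ⟨C, hC, .updR ?_ (locs_closR_subset_iff.2 ?_)⟩
    · exact hRC.mono (domTE_append_singleton_sdiff_subset ..) le_rfl
    · refine (hRC.mono (fv_fix_subset hbody.fv_subset) le_rfl).of_sub fun y hy p hp => ?_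
      rwa [← hagree y (lookupTE_isSome_of_mem_domTE (fv_fix_subset hbody.fv_subset hy))]

end

lemma Ans.removeVar_eq_res {a : Ans B} {x : ℕ} {v : Val B} {R' : REnv B} {H' : Heap B}
    (h : a.removeVar x = .res v R' H') : ∃ R₀, a = .res v R₀ H' ∧ R' = remR R₀ x := by
  cases a <;> cases h
  exact ⟨_, rfl, rfl⟩

lemma Ans.withEnv_eq_res {a : Ans B} {R : REnv B} {v : Val B} {R' : REnv B} {H' : Heap B}
    (h : a.withEnv R = .res v R' H') : ∃ R₀, a = .res v R₀ H' ∧ R' = R := by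
  cases a <;> cases h
  exact ⟨_, rfl, rfl⟩

def EnvSub (R' R : REnv B) : Prop := ∀ ⦃y p⦄, R' y = some p → R y = some p

lemma remR_sub (R : REnv B) (x : ℕ) : EnvSub (remR R x) R := by
  intro y p h
  by_cases hy : y = x <;> simp_all [remR]

lemma dropRV_sub (R : REnv B) (x : ℕ) (τ : FTy) : EnvSub (dropRV R x τ) R := by
  unfold dropRV
  split
  · exact fun _ _ h => h
  · exact remR_sub R x

lemma splitREnv_snd_sub (R : REnv B) (S : Finset ℕ) : EnvSub (splitREnv R S).2 R := by
  intro y p h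
  simp only [splitREnv] at h
  split at h
  · split_ifs at h; simp_all
  · cases h

lemma EnvSub.remR_of_updR {R R₁ R₂ : REnv B} {x : ℕ} {τ : FTy} {v : Val B}
    (h₂ : EnvSub R₂ (updR R₁ x τ v)) (h₁ : EnvSub R₁ R) : EnvSub (remR R₂ x) R := by
  intro y p h
  have hyx : y ≠ x := by rintro rfl; simp [remR] at h
  simp only [remR, hyx, if_false] at h
  have h' := h₂ h
  simp only [updR, hyx, if_false] at h'
  exact h₁ h'

lemma Eval.envSub {tru : B → Bool} {M : Expr B} {R : REnv B} {H : Heap B} {a : Ans B}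
    (he : Eval tru M R H a) {v : Val B} {R' : REnv B} {H' : Heap B} (ha : a = .res v R' H') :
    EnvSub R' R := by
  induction he generalizing v R' H' with
  | fail | leteF => cases ha
  | unit | const | op _ => cases ha; exact fun _ _ h => h
  | app1 _ _ _ _ | app2 _ _ _ _ =>
    obtain ⟨_, -, rfl⟩ := Ans.withEnv_eq_res ha
    exact fun _ _ h => h
  | var _ | deref _ _ | mkref _ _ | assign _ _ => cases ha; exact dropRV_sub ..
  | lam | fixE => cases ha; exact splitREnv_snd_sub ..
  | iteT _ _ _ ih | iteF _ _ _ ih => exact ih ha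
  | lete _ _ ih₁ ih₂ =>
    obtain ⟨_, rfl, rfl⟩ := Ans.removeVar_eq_res ha
    exact (ih₂ rfl).remR_of_updR (ih₁ rfl)

theorem Eval.frame {tru : B → Bool} {M : Expr B} {R : REnv B} {H : Heap B} {a : Ans B}
    (he : Eval tru M R H a) {v : Val B} {R' : REnv B} {H' : Heap B} (ha : a = .res v R' H')
    {H₁ H₂ : Heap B} {C : Set ℕ} (hH : H = HUn H₁ H₂) (hd : HDisj H₁ H₂)
    (hC : ClosedFootprint H₁ C) (hR : EnvConfined R (fv M) C) :
    ∃ H₁' C', Eval tru M R H₁ (.res v R' H₁') ∧ HDisj H₁' H₂ ∧ H' = HUn H₁' H₂ ∧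
      C ⊆ C' ∧ ClosedFootprint H₁' C' ∧ v.locs ⊆ C' := by
  induction he generalizing v R' H' H₁ C with
  | fail | leteF => cases ha
  | unit => cases ha; exact ⟨H₁, C, .unit, hd, hH, subset_rfl, hC, by rintro _ ⟨⟩⟩
  | const => cases ha; exact ⟨H₁, C, .const, hd, hH, subset_rfl, hC, by rintro _ ⟨⟩⟩
  | op hbs => cases ha; exact ⟨H₁, C, .op hbs, hd, hH, subset_rfl, hC, by rintro _ ⟨⟩⟩
  | var hx =>
    cases ha; exact ⟨H₁, C, .var hx, hd, hH, subset_rfl, hC, hR.locs_subset (by simp [fv]) hx⟩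
  | deref hx hw =>
    cases ha; subst hH
    obtain ⟨hw₁, hwC⟩ := hC.eq_of_HUn_eq (hR.locs_subset (by simp [fv]) hx .loc) hw
    exact ⟨H₁, C, .deref hx hw₁, hd, rfl, subset_rfl, hC, hwC⟩
  | @mkref _ _ _ _ _ _ ℓ hx hℓ =>
    cases ha; subst hH
    obtain ⟨h₁, h₂⟩ := HUn_apply_eq_none hℓ
    have hwC := (hR.locs_subset (by simp [fv]) hx).trans (Set.subset_insert ℓ C)
    exact ⟨_, _, .mkref hx h₁, hd.updH h₂ _, updH_HUn .., Set.subset_insert _ _, hC.updH hwC,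
      by rintro _ ⟨⟩; exact Set.mem_insert _ _⟩
  | assign hy hx =>
    cases ha; subst hH
    have hℓC := hR.locs_subset (by simp [fv]) hy .loc
    refine ⟨_, C, .assign hy hx, hd.updH (hC.frame_eq_none hd hℓC) _, updH_HUn .., subset_rfl,
      hC.updH_of_mem hℓC (hR.locs_subset (by simp [fv]) hx), by rintro _ ⟨⟩⟩
  | lete he₁ _ ih₁ ih₂ =>
    obtain ⟨_, rfl, rfl⟩ := Ans.removeVar_eq_res ha
    obtain ⟨H₁a, C₁, ev₁, hd₁, hH₁, hCC₁, hC₁, hv₁⟩ :=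
      ih₁ rfl hH hd hC (hR.mono Finset.subset_union_left le_rfl)
    have hR₁ := (hR.mono Finset.subset_union_right hCC₁).of_sub fun _ _ _ hp => he₁.envSub rfl hp
    obtain ⟨H₁b, C₂, ev₂, hd₂, hH₂, hCC₂, hC₂, hv₂⟩ := ih₂ rfl hH₁ hd₁ hC₁ (hR₁.updR hv₁)
    exact ⟨H₁b, C₂, .lete ev₁ ev₂, hd₂, hH₂, hCC₁.trans hCC₂, hC₂, hv₂⟩
  | iteT hx ht _ ih =>
    have hR₁ := hR.mono (Finset.subset_union_left.trans (Finset.subset_insert _ _)) le_rfl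
    obtain ⟨H₁', C', ev, hrest⟩ := ih ha hH hd hC hR₁
    exact ⟨H₁', C', .iteT hx ht ev, hrest⟩
  | iteF hx hf _ ih =>
    have hR₂ := hR.mono (Finset.subset_union_right.trans (Finset.subset_insert _ _)) le_rfl
    obtain ⟨H₁', C', ev, hrest⟩ := ih ha hH hd hC hR₂
    exact ⟨H₁', C', .iteF hx hf ev, hrest⟩
  | lam =>
    cases ha
    refine ⟨H₁, C, .lam, hd, hH, subset_rfl, hC, locs_clos_subset_iff.2 ?_⟩
    exact hR.of_sub fun y hy p hp => by simpa [splitREnv, hy] using hp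
  | fixE =>
    cases ha
    refine ⟨H₁, C, .fixE, hd, hH, subset_rfl, hC, locs_closR_subset_iff.2 ?_⟩
    exact hR.of_sub fun y hy p hp => by simpa [splitREnv, hy] using hp
  | app1 hf hx _ ih =>
    obtain ⟨_, rfl, rfl⟩ := Ans.withEnv_eq_res ha
    obtain ⟨H₁', C', ev, hrest⟩ := ih rfl hH hd hC
      (.clos_body (hR.locs_subset (by simp [fv]) hf) (hR.locs_subset (by simp [fv]) hx))
    exact ⟨H₁', C', .app1 hf hx ev, hrest⟩
  | app2 hf hx _ ih =>
    obtain ⟨_, rfl, rfl⟩ := Ans.withEnv_eq_res ha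
    obtain ⟨H₁', C', ev, hrest⟩ := ih rfl hH hd hC
      (.closR_body (hR.locs_subset (by simp [fv]) hf) (hR.locs_subset (by simp [fv]) hx))
    exact ⟨H₁', C', .app2 hf hx ev, hrest⟩

end

/-- Heap strengthening for bPCFRL evaluation: evaluation depends only on, and
modifies only, the portion of the heap owned by the typing environment. -/
theorem heap_strengthening {B : Type} (tru : B → Bool) {Γ Γ' : TEnv} {M : Expr B}
    {τ : FTy} {R R' : REnv B} {H₁ H₂ H' : Heap B} {v : Val B}
    (ht : EnvTyped R H₁ Γ) (hty : Typed Γ M τ Γ') (hd : HDisj H₁ H₂)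
    (he : Eval tru M R (HUn H₁ H₂) (.res v R' H')) :
    ∃ H₁' : Heap B, Eval tru M R H₁ (.res v R' H₁') ∧ HDisj H₁' H₂ ∧ H' = HUn H₁' H₂ := by
  obtain ⟨C, hC, hR⟩ := ht.exists_closedFootprint
  obtain ⟨H₁', -, ev, hd', hH', -⟩ := he.frame rfl rfl hd hC (hR.mono hty.fv_subset le_rfl)
  exact ⟨H₁', ev, hd', hH'⟩
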